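/- Assume C is a generic bicategory satisfying Axioms 1 and 2. For any composable pair consisting of a right adjoint s* : X → T and a left adjoint t : T → Z, the identity 2-cell on the composite t ∘ s* exhibits it as an initial generic factorization of itself. -/
import Mathlib


open CategoryTheory CategoryTheory.Bicategory

universe w v u

namespace GenericBicat

variable {B : Type u} [Bicategory.{w, v} B]

/-- An object of the category of elements of `C(c, - ∘ -)` (through the object `Y`):
a factorization of the 1-cell `c` as a composite through `Y`, together with a 2-cell. -/
structure Fac {X Z : B} (c : X ⟶ Z) (Y : B) where
  fst : X ⟶ Y
  snd : Y ⟶ Z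
  cell : c ⟶ fst ≫ snd

/-- Morphisms in the category of elements of `C(c, - ∘ -)`: a pair of 2-cells
pasting one factorization to the other. -/
def FacHom {X Z : B} {c : X ⟶ Z} {Y : B} (F G : Fac c Y) : Prop :=
  ∃ (u : F.fst ⟶ G.fst) (v : F.snd ⟶ G.snd),
    G.cell = F.cell ≫ (u ▷ F.snd) ≫ (G.fst ◁ v)

/-- Two factorizations are connected if they lie in the same connected component of
the category of elements. -/
def Connected {X Z : B} {c : X ⟶ Z} {Y : B} (F G : Fac c Y) : Prop :=
  Relation.EqvGen FacHom F G

/-- A 2-cell `δ : c ⟶ F.fst ≫ F.snd` is generic if it is initial in its connected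
component of the category of elements of `C(c, - ∘ -)`. -/
def IsGeneric {X Z : B} {c : X ⟶ Z} {Y : B} (F : Fac c Y) : Prop :=
  ∀ G : Fac c Y, Connected F G →
    ∃! p : (F.fst ⟶ G.fst) × (F.snd ⟶ G.snd),
      G.cell = F.cell ≫ (p.1 ▷ F.snd) ≫ (G.fst ◁ p.2)

/-- A bicategory is generic if each presheaf `C(c, - ∘ -)` is a coproduct of representables;
equivalently, every 2-cell `c ⟶ a ≫ b` factors through a generic 2-cell. -/
def IsGenericBicategory (B : Type u) [Bicategory.{w, v} B] : Prop :=
  ∀ {X Z : B} (c : X ⟶ Z) (Y : B) (G : Fac c Y), ∃ F : Fac c Y, IsGeneric F ∧ FacHom F G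

/-- The pasting of a 2-cell `δ : c ⟶ l ≫ r` with a 2-cell `η : 𝟙 Y ⟶ h ≫ k` out of the
identity and comparison 2-cells `α : l ≫ h ⟶ a` and `β : k ≫ r ⟶ b`. -/
def pasteFac {X Y Y' Z : B} {l : X ⟶ Y} {r : Y ⟶ Z} {c : X ⟶ Z} (δ : c ⟶ l ≫ r)
    {h : Y ⟶ Y'} {k : Y' ⟶ Y} (η : 𝟙 Y ⟶ h ≫ k) {a : X ⟶ Y'} {b : Y' ⟶ Z}
    (α : l ≫ h ⟶ a) (β : k ≫ r ⟶ b) : c ⟶ a ≫ b :=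
  δ ≫ (l ◁ ((λ_ r).inv ≫ (η ▷ r) ≫ (α_ h k r).hom)) ≫ (α_ l h (k ≫ r)).inv ≫
    (α ▷ (k ≫ r)) ≫ (a ◁ β)

/-- `δ : c ⟶ l ≫ r` is an *initial generic* 2-cell: it is an invertible generic 2-cell,
every 2-cell `γ : c ⟶ a ≫ b` factors as `δ` pasted with a generic `η : 𝟙 Y ⟶ h ≫ k` out of
the identity and comparison 2-cells, and such factorizations are unique up to coherent
isomorphism. -/
def IsInitialGeneric {X Y Z : B} {c : X ⟶ Z} (l : X ⟶ Y) (r : Y ⟶ Z) (δ : c ⟶ l ≫ r) : Prop :=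
  IsGeneric (⟨l, r, δ⟩ : Fac c Y) ∧ IsIso δ ∧
  ∀ {Y' : B} (a : X ⟶ Y') (b : Y' ⟶ Z) (γ : c ⟶ a ≫ b),
    (∃ (h : Y ⟶ Y') (k : Y' ⟶ Y) (η : 𝟙 Y ⟶ h ≫ k) (α : l ≫ h ⟶ a) (β : k ≫ r ⟶ b),
      IsGeneric (⟨h, k, η⟩ : Fac (𝟙 Y) Y') ∧ γ = pasteFac δ η α β) ∧
    (∀ (h : Y ⟶ Y') (k : Y' ⟶ Y) (η : 𝟙 Y ⟶ h ≫ k) (α : l ≫ h ⟶ a) (β : k ≫ r ⟶ b),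
      IsGeneric (⟨h, k, η⟩ : Fac (𝟙 Y) Y') → γ = pasteFac δ η α β →
      ∀ (h' : Y ⟶ Y') (k' : Y' ⟶ Y) (η' : 𝟙 Y ⟶ h' ≫ k') (α' : l ≫ h' ⟶ a) (β' : k' ≫ r ⟶ b),
        IsGeneric (⟨h', k', η'⟩ : Fac (𝟙 Y) Y') → γ = pasteFac δ η' α' β' →
        ∃ (φ : h ≅ h') (ψ : k ≅ k'),
          η' = η ≫ (φ.hom ▷ k) ≫ (h' ◁ ψ.hom) ∧
          α = (l ◁ φ.hom) ≫ α' ∧ β = (ψ.hom ▷ r) ≫ β')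

/-- Axiom 1: every 1-cell has an initial generic 2-cell. -/
def Axiom1 (B : Type u) [Bicategory.{w, v} B] : Prop :=
  ∀ {X Z : B} (c : X ⟶ Z), ∃ (Y : B) (l : X ⟶ Y) (r : Y ⟶ Z) (δ : c ⟶ l ≫ r),
    IsInitialGeneric l r δ

/-- Axiom 2: initial factorizations yield initial generics: in any factorization through an
initial generic `δ : c ⟶ l ≫ r` via a generic `η : 𝟙 Y ⟶ h ≫ k` out of the identity, the
identity 2-cells on `l ≫ h` and on `k ≫ r` are initial generics. -/
def Axiom2 (B : Type u) [Bicategory.{w, v} B] : Prop :=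
  ∀ {X Y Y' Z : B} (l : X ⟶ Y) (r : Y ⟶ Z) (c : X ⟶ Z) (δ : c ⟶ l ≫ r),
    IsInitialGeneric l r δ →
    ∀ (h : Y ⟶ Y') (k : Y' ⟶ Y) (η : 𝟙 Y ⟶ h ≫ k), IsGeneric (⟨h, k, η⟩ : Fac (𝟙 Y) Y') →
      IsInitialGeneric l h (𝟙 (l ≫ h)) ∧ IsInitialGeneric k r (𝟙 (k ≫ r))


section Auxiliary

variable {B : Type u} [Bicategory.{w, v} B]

/-- The mate of a 2-cell `𝟙 a ⟶ f ≫ n` under an adjunction `f ⊣ g`. -/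
def mateSnd {a b : B} {f : a ⟶ b} {g : b ⟶ a} (adj : f ⊣ g) {n : b ⟶ a}
    (ζ : 𝟙 a ⟶ f ≫ n) : g ⟶ n :=
  (ρ_ g).inv ≫ (g ◁ ζ) ≫ (α_ g f n).inv ≫ (adj.counit ▷ n) ≫ (λ_ n).hom

/-- The mate of a 2-cell `𝟙 a ⟶ m ≫ g` under an adjunction `f ⊣ g`. -/
def mateFst {a b : B} {f : a ⟶ b} {g : b ⟶ a} (adj : f ⊣ g) {m : a ⟶ b}
    (ξ : 𝟙 a ⟶ m ≫ g) : f ⟶ m :=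
  (λ_ f).inv ≫ (ξ ▷ f) ≫ (α_ m g f).hom ≫ (m ◁ adj.counit) ≫ (ρ_ m).hom

theorem unit_mateSnd {a b : B} {f : a ⟶ b} {g : b ⟶ a} (adj : f ⊣ g) {n : b ⟶ a}
    (ζ : 𝟙 a ⟶ f ≫ n) : adj.unit ≫ (f ◁ mateSnd adj ζ) = ζ := by
  dsimp only [mateSnd]
  calc adj.unit ≫ (f ◁ ((ρ_ g).inv ≫ (g ◁ ζ) ≫ (α_ g f n).inv ≫ (adj.counit ▷ n) ≫ (λ_ n).hom))
      = 𝟙 _ ⊗≫ (adj.unit ▷ 𝟙 a ≫ (f ≫ g) ◁ ζ) ⊗≫ f ◁ adj.counit ▷ n ⊗≫ 𝟙 _ := by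
        bicategory
    _ = 𝟙 _ ⊗≫ ζ ⊗≫ (leftZigzag adj.unit adj.counit) ▷ n ⊗≫ 𝟙 _ := by
        rw [← whisker_exchange]; dsimp only [leftZigzag]; bicategory
    _ = ζ := by rw [adj.left_triangle]; bicategory

theorem unit_mateFst {a b : B} {f : a ⟶ b} {g : b ⟶ a} (adj : f ⊣ g) {m : a ⟶ b}
    (ξ : 𝟙 a ⟶ m ≫ g) : adj.unit ≫ (mateFst adj ξ ▷ g) = ξ := by
  dsimp only [mateFst]
  calc adj.unit ≫ (((λ_ f).inv ≫ (ξ ▷ f) ≫ (α_ m g f).hom ≫ (m ◁ adj.counit) ≫ (ρ_ m).hom) ▷ g)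
      = 𝟙 _ ⊗≫ (𝟙 a ◁ adj.unit ≫ ξ ▷ (f ≫ g)) ⊗≫ m ◁ adj.counit ▷ g ⊗≫ 𝟙 _ := by
        bicategory
    _ = 𝟙 _ ⊗≫ ξ ⊗≫ m ◁ (rightZigzag adj.unit adj.counit) ⊗≫ 𝟙 _ := by
        rw [whisker_exchange]; dsimp only [rightZigzag]; bicategory
    _ = ξ := by rw [adj.right_triangle]; bicategory

theorem mateSnd_unit {a b : B} {f : a ⟶ b} {g : b ⟶ a} (adj : f ⊣ g) :
    mateSnd adj adj.unit = 𝟙 g := by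
  dsimp only [mateSnd]
  calc (ρ_ g).inv ≫ (g ◁ adj.unit) ≫ (α_ g f g).inv ≫ (adj.counit ▷ g) ≫ (λ_ g).hom
      = 𝟙 _ ⊗≫ (rightZigzag adj.unit adj.counit) ⊗≫ 𝟙 _ := by
        dsimp only [rightZigzag]; bicategory
    _ = 𝟙 g := by rw [adj.right_triangle]; bicategory

theorem mateFst_unit {a b : B} {f : a ⟶ b} {g : b ⟶ a} (adj : f ⊣ g) :
    mateFst adj adj.unit = 𝟙 f := by
  dsimp only [mateFst]
  calc (λ_ f).inv ≫ (adj.unit ▷ f) ≫ (α_ f g f).hom ≫ (f ◁ adj.counit) ≫ (ρ_ f).hom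
      = 𝟙 _ ⊗≫ (leftZigzag adj.unit adj.counit) ⊗≫ 𝟙 _ := by
        dsimp only [leftZigzag]; bicategory
    _ = 𝟙 f := by rw [adj.left_triangle]; bicategory

theorem mateSnd_comp {a b : B} {f : a ⟶ b} {g : b ⟶ a} (adj : f ⊣ g) {n n' : b ⟶ a}
    (ζ : 𝟙 a ⟶ f ≫ n) (w : n ⟶ n') :
    mateSnd adj ζ ≫ w = mateSnd adj (ζ ≫ (f ◁ w)) := by
  calc mateSnd adj ζ ≫ w
      = 𝟙 _ ⊗≫ g ◁ ζ ⊗≫ (adj.counit ▷ n ≫ 𝟙 b ◁ w) ⊗≫ 𝟙 _ := by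
        dsimp only [mateSnd]; bicategory
    _ = 𝟙 _ ⊗≫ (g ◁ ζ ≫ g ◁ (f ◁ w)) ⊗≫ adj.counit ▷ n' ⊗≫ 𝟙 _ := by
        rw [← whisker_exchange]; bicategory
    _ = mateSnd adj (ζ ≫ (f ◁ w)) := by
        rw [← Bicategory.whiskerLeft_comp]; dsimp only [mateSnd]; bicategory

theorem mateFst_comp {a b : B} {f : a ⟶ b} {g : b ⟶ a} (adj : f ⊣ g) {m m' : a ⟶ b}
    (ξ : 𝟙 a ⟶ m ≫ g) (w : m ⟶ m') :
    mateFst adj ξ ≫ w = mateFst adj (ξ ≫ (w ▷ g)) := by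
  calc mateFst adj ξ ≫ w
      = 𝟙 _ ⊗≫ ξ ▷ f ⊗≫ (m ◁ adj.counit ≫ w ▷ 𝟙 b) ⊗≫ 𝟙 _ := by
        dsimp only [mateFst]; bicategory
    _ = 𝟙 _ ⊗≫ (ξ ▷ f ≫ ((w ▷ g) ▷ f)) ⊗≫ m' ◁ adj.counit ⊗≫ 𝟙 _ := by
        rw [whisker_exchange]; bicategory
    _ = mateFst adj (ξ ≫ (w ▷ g)) := by
        rw [← Bicategory.comp_whiskerRight]; dsimp only [mateFst]; bicategory

lemma paste_paste {X Y Z : B} {c : X ⟶ Z} {a₁ a₂ a₃ : X ⟶ Y} {b₁ b₂ b₃ : Y ⟶ Z}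
    (cell : c ⟶ a₁ ≫ b₁) (u₁ : a₁ ⟶ a₂) (v₁ : b₁ ⟶ b₂) (u₂ : a₂ ⟶ a₃) (v₂ : b₂ ⟶ b₃) :
    cell ≫ (u₁ ▷ b₁) ≫ (a₂ ◁ v₁) ≫ (u₂ ▷ b₂) ≫ (a₃ ◁ v₂)
      = cell ≫ ((u₁ ≫ u₂) ▷ b₁) ≫ (a₃ ◁ (v₁ ≫ v₂)) := by
  slice_lhs 3 4 => rw [whisker_exchange]
  simp only [comp_whiskerRight, Bicategory.whiskerLeft_comp, Category.assoc]

lemma isGeneric_ofIso {X Z Y : B} {c : X ⟶ Z} {F G : Fac c Y} (hF : IsGeneric F)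
    (u : F.fst ⟶ G.fst) (u' : G.fst ⟶ F.fst) (v : F.snd ⟶ G.snd) (v' : G.snd ⟶ F.snd)
    (huu' : u ≫ u' = 𝟙 _) (hu'u : u' ≫ u = 𝟙 _)
    (hvv' : v ≫ v' = 𝟙 _) (hv'v : v' ≫ v = 𝟙 _)
    (hGF : G.cell = F.cell ≫ (u ▷ F.snd) ≫ (G.fst ◁ v)) : IsGeneric G := by
  intro H hH
  obtain ⟨p, hp, hup⟩ := hF H (.trans _ _ _ (.rel _ _ ⟨u, v, hGF⟩) hH)
  refine ⟨(u' ≫ p.1, v' ≫ p.2), ?_, ?_⟩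
  · rw [hGF]
    simp only [Category.assoc]
    rw [paste_paste, ← Category.assoc u u' p.1, ← Category.assoc v v' p.2, huu', hvv',
      Category.id_comp, Category.id_comp]
    exact hp
  · rintro ⟨q₁, q₂⟩ hq
    rw [hGF] at hq
    simp only [Category.assoc] at hq
    rw [paste_paste] at hq
    have hpq := hup (u ≫ q₁, v ≫ q₂) hq
    have h1 : u ≫ q₁ = p.1 := congrArg Prod.fst hpq
    have h2 : v ≫ q₂ = p.2 := congrArg Prod.snd hpq
    have e1 : q₁ = u' ≫ p.1 := by rw [← h1, ← Category.assoc, hu'u, Category.id_comp]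
    have e2 : q₂ = v' ≫ p.2 := by rw [← h2, ← Category.assoc, hv'v, Category.id_comp]
    ext <;> simp_all

/-- The unit of an adjunction is a generic 2-cell (in a generic bicategory). -/
lemma unit_isGeneric (hB : IsGenericBicategory B) {a b : B} {f : a ⟶ b} {g : b ⟶ a}
    (adj : f ⊣ g) : IsGeneric (⟨f, g, adj.unit⟩ : Fac (𝟙 a) b) := by
  obtain ⟨⟨h, k, η⟩, hF, u, v, hEq⟩ := hB (𝟙 a) b ⟨f, g, adj.unit⟩
  dsimp only at u v hEq
  have hvv' : v ≫ mateSnd adj (η ≫ (u ▷ k)) = 𝟙 k := by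
    have key : η ≫ (u ▷ k) ≫ (f ◁ (v ≫ mateSnd adj (η ≫ (u ▷ k)))) = η ≫ (u ▷ k) := by
      rw [Bicategory.whiskerLeft_comp]
      calc η ≫ (u ▷ k) ≫ (f ◁ v) ≫ (f ◁ mateSnd adj (η ≫ (u ▷ k)))
          = (η ≫ (u ▷ k) ≫ (f ◁ v)) ≫ (f ◁ mateSnd adj (η ≫ (u ▷ k))) := by
            simp only [Category.assoc]
        _ = adj.unit ≫ (f ◁ mateSnd adj (η ≫ (u ▷ k))) := by rw [← hEq]
        _ = η ≫ (u ▷ k) := unit_mateSnd adj _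
    obtain ⟨p, hp, hup⟩ := hF ⟨f, k, η ≫ (u ▷ k)⟩ (.rel _ _ ⟨u, 𝟙 k, by simp⟩)
    have h1 := hup (u, 𝟙 k) (by simp)
    have h2 := hup (u, v ≫ mateSnd adj (η ≫ (u ▷ k))) (by exact key.symm)
    exact (congrArg Prod.snd (h2.trans h1.symm))
  have huu' : u ≫ mateFst adj (η ≫ (h ◁ v)) = 𝟙 h := by
    have key : η ≫ ((u ≫ mateFst adj (η ≫ (h ◁ v))) ▷ k) ≫ (h ◁ v) = η ≫ (h ◁ v) := by
      rw [comp_whiskerRight]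
      calc η ≫ ((u ▷ k) ≫ (mateFst adj (η ≫ (h ◁ v)) ▷ k)) ≫ (h ◁ v)
          = η ≫ (u ▷ k) ≫ (f ◁ v) ≫ (mateFst adj (η ≫ (h ◁ v)) ▷ g) := by
            rw [whisker_exchange]; simp only [Category.assoc]
        _ = adj.unit ≫ (mateFst adj (η ≫ (h ◁ v)) ▷ g) := by
            rw [hEq]; simp only [Category.assoc]
        _ = η ≫ (h ◁ v) := unit_mateFst adj _
    obtain ⟨p, hp, hup⟩ := hF ⟨h, g, η ≫ (h ◁ v)⟩ (.rel _ _ ⟨𝟙 h, v, by simp⟩)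
    have h1 := hup (𝟙 h, v) (by simp)
    have h2 := hup (u ≫ mateFst adj (η ≫ (h ◁ v)), v) (by exact key.symm)
    exact (congrArg Prod.fst (h2.trans h1.symm))
  have hu'u : mateFst adj (η ≫ (h ◁ v)) ≫ u = 𝟙 f := by
    rw [mateFst_comp]
    have : (η ≫ (h ◁ v)) ≫ (u ▷ g) = adj.unit := by
      rw [Category.assoc, whisker_exchange]
      exact hEq.symm
    rw [this, mateFst_unit]
  have hv'v : mateSnd adj (η ≫ (u ▷ k)) ≫ v = 𝟙 g := by
    rw [mateSnd_comp]
    have : (η ≫ (u ▷ k)) ≫ (f ◁ v) = adj.unit := by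
      rw [Category.assoc]; exact hEq.symm
    rw [this, mateSnd_unit]
  exact isGeneric_ofIso hF u (mateFst adj (η ≫ (h ◁ v))) v (mateSnd adj (η ≫ (u ▷ k)))
    huu' hu'u hvv' hv'v hEq


/-- The identity factorization of `𝟙 T` (via `λ⁻¹`) is generic. -/
lemma id_fac_isGeneric (hB : IsGenericBicategory B) (T : B) :
    IsGeneric (⟨𝟙 T, 𝟙 T, (λ_ (𝟙 T)).inv⟩ : Fac (𝟙 T) T) := by
  have h := unit_isGeneric hB (Bicategory.Adjunction.id T)
  have e : (Bicategory.Adjunction.id T).unit = (λ_ (𝟙 T)).inv := by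
    show (ρ_ (𝟙 T)).inv = (λ_ (𝟙 T)).inv
    exact (congrArg Iso.inv (Iso.ext Bicategory.unitors_equal)).symm
  rwa [e] at h

lemma pasteFac_id_id {T Y' : B} {h : T ⟶ Y'} {k : Y' ⟶ T} (η : 𝟙 T ⟶ h ≫ k)
    {a : T ⟶ Y'} {b : Y' ⟶ T} (α : 𝟙 T ≫ h ⟶ a) (β : k ≫ 𝟙 T ⟶ b) :
    pasteFac (λ_ (𝟙 T)).inv η α β
      = η ≫ (((λ_ h).inv ≫ α) ▷ k) ≫ (a ◁ ((ρ_ k).inv ≫ β)) := by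
  dsimp only [pasteFac]
  bicategory

/-- The identity 1-cell admits `λ⁻¹ : 𝟙 T ⟶ 𝟙 T ≫ 𝟙 T` as an initial generic 2-cell. -/
lemma lambdaInv_isInitialGeneric (hB : IsGenericBicategory B) (T : B) :
    IsInitialGeneric (𝟙 T) (𝟙 T) ((λ_ (𝟙 T)).inv) := by
  refine ⟨id_fac_isGeneric hB T, inferInstance, ?_⟩
  intro Y' a b γ
  constructor
  · obtain ⟨⟨h, k, η⟩, hF, u, v, hEq⟩ := hB (𝟙 T) Y' ⟨a, b, γ⟩
    dsimp only at u v hEq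
    refine ⟨h, k, η, (λ_ h).hom ≫ u, (ρ_ k).hom ≫ v, hF, ?_⟩
    rw [pasteFac_id_id]
    simpa using hEq
  · intro h k η α β hgen hfac h' k' η' α' β' hgen' hfac'
    have e1 : γ = η ≫ (((λ_ h).inv ≫ α) ▷ k) ≫ (a ◁ ((ρ_ k).inv ≫ β)) := by
      rw [hfac, pasteFac_id_id]
    have e1' : γ = η' ≫ (((λ_ h').inv ≫ α') ▷ k') ≫ (a ◁ ((ρ_ k').inv ≫ β')) := by
      rw [hfac', pasteFac_id_id]
    have cFG : Connected (⟨h, k, η⟩ : Fac (𝟙 T) Y') ⟨a, b, γ⟩ := .rel _ _ ⟨_, _, e1⟩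
    have cF'G : Connected (⟨h', k', η'⟩ : Fac (𝟙 T) Y') ⟨a, b, γ⟩ := .rel _ _ ⟨_, _, e1'⟩
    have cFF' : Connected (⟨h, k, η⟩ : Fac (𝟙 T) Y') ⟨h', k', η'⟩ :=
      .trans _ _ _ cFG (.symm _ _ cF'G)
    obtain ⟨p, hp, hup⟩ := hgen ⟨h', k', η'⟩ cFF'
    obtain ⟨q, hq, huq⟩ := hgen' ⟨h, k, η⟩ (.symm _ _ cFF')
    dsimp only at hp hup hq huq
    obtain ⟨e, he, hue⟩ := hgen ⟨h, k, η⟩ (.refl _)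
    have i1 := hue (𝟙 h, 𝟙 k) (by simp)
    have i2 := hue (p.1 ≫ q.1, p.2 ≫ q.2) (by
      show η = _
      conv_lhs => rw [hq, hp]
      simp only [Category.assoc]
      rw [paste_paste])
    have pq1 : p.1 ≫ q.1 = 𝟙 h := congrArg Prod.fst (i2.trans i1.symm)
    have pq2 : p.2 ≫ q.2 = 𝟙 k := congrArg Prod.snd (i2.trans i1.symm)
    obtain ⟨e', he', hue'⟩ := hgen' ⟨h', k', η'⟩ (.refl _)
    have j1 := hue' (𝟙 h', 𝟙 k') (by simp)
    have j2 := hue' (q.1 ≫ p.1, q.2 ≫ p.2) (by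
      show η' = _
      conv_lhs => rw [hp, hq]
      simp only [Category.assoc]
      rw [paste_paste])
    have qp1 : q.1 ≫ p.1 = 𝟙 h' := congrArg Prod.fst (j2.trans j1.symm)
    have qp2 : q.2 ≫ p.2 = 𝟙 k' := congrArg Prod.snd (j2.trans j1.symm)
    obtain ⟨m, hm, hum⟩ := hgen ⟨a, b, γ⟩ cFG
    have a1 := hum ((λ_ h).inv ≫ α, (ρ_ k).inv ≫ β) e1
    have a2 := hum (p.1 ≫ ((λ_ h').inv ≫ α'), p.2 ≫ ((ρ_ k').inv ≫ β')) (by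
      show γ = _
      conv_lhs => rw [e1', hp]
      simp only [Category.assoc]
      rw [paste_paste])
    have hu : (λ_ h).inv ≫ α = p.1 ≫ (λ_ h').inv ≫ α' := by
      have := congrArg Prod.fst (a1.trans a2.symm)
      simpa using this
    have hv : (ρ_ k).inv ≫ β = p.2 ≫ (ρ_ k').inv ≫ β' := by
      have := congrArg Prod.snd (a1.trans a2.symm)
      simpa using this
    refine ⟨⟨p.1, q.1, pq1, qp1⟩, ⟨p.2, q.2, pq2, qp2⟩, hp, ?_, ?_⟩
    · calc α = (λ_ h).hom ≫ (λ_ h).inv ≫ α := by simp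
        _ = (λ_ h).hom ≫ p.1 ≫ (λ_ h').inv ≫ α' := by rw [hu]
        _ = (𝟙 T ◁ p.1) ≫ (λ_ h').hom ≫ (λ_ h').inv ≫ α' := by
            rw [← Category.assoc, ← Bicategory.leftUnitor_naturality, Category.assoc]
        _ = (𝟙 T ◁ p.1) ≫ α' := by simp
    · calc β = (ρ_ k).hom ≫ (ρ_ k).inv ≫ β := by simp
        _ = (ρ_ k).hom ≫ p.2 ≫ (ρ_ k').inv ≫ β' := by rw [hv]
        _ = (p.2 ▷ 𝟙 T) ≫ (ρ_ k').hom ≫ (ρ_ k').inv ≫ β' := by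
            rw [← Category.assoc, ← Bicategory.rightUnitor_naturality, Category.assoc]
        _ = (p.2 ▷ 𝟙 T) ≫ β' := by simp

end Auxiliary

end GenericBicat

open GenericBicat

/-- In a generic bicategory satisfying Axioms 1 and 2, for any composable pair consisting
of a right adjoint `s* : X ⟶ T` and a left adjoint `t : T ⟶ Z`, the identity 2-cell on
the composite exhibits it as an initial generic factorization of itself. -/
theorem rightAdjoint_leftAdjoint_composite_initial {B : Type u} [Bicategory.{w, v} B]
    (hB : IsGenericBicategory B) (hA1 : Axiom1 B) (hA2 : Axiom2 B)
    {X T Z : B} (sStar : X ⟶ T) (t : T ⟶ Z)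
    (hs : ∃ s : T ⟶ X, Nonempty (s ⊣ sStar)) (ht : ∃ tStar : Z ⟶ T, Nonempty (t ⊣ tStar)) :
    IsInitialGeneric sStar t (𝟙 (sStar ≫ t)) := by
  obtain ⟨s, ⟨adjs⟩⟩ := hs
  obtain ⟨tStar, ⟨adjt⟩⟩ := ht
  have h1 : IsInitialGeneric (𝟙 T) (𝟙 T) ((λ_ (𝟙 T)).inv) := lambdaInv_isInitialGeneric hB T
  have h2 := (hA2 (𝟙 T) (𝟙 T) (𝟙 T) ((λ_ (𝟙 T)).inv) h1 t tStar adjt.unit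
    (unit_isGeneric hB adjt)).1
  exact (hA2 (𝟙 T) t (𝟙 T ≫ t) (𝟙 (𝟙 T ≫ t)) h2 s sStar adjs.unit
    (unit_isGeneric hB adjs)).2
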